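/- arXiv:2312.12572 — 2 statements merged into one kernel-verified Lean document; each statement's English description precedes it below -/
import Mathlib

section
/- For every r ≥ 0 and every real w, ν_{r,r-1}(w) ≥ w², where ν_{r,s}(w) = r·Υ'(w)·w + Υ(-w) - s·Υ(w) and Υ(x) = eˣ - 1 - x. -/
noncomputable def Ups (x : ℝ) : ℝ := Real.exp x - 1 - x

noncomputable def Ups' (x : ℝ) : ℝ := Real.exp x - 1

noncomputable def nu (r s w : ℝ) : ℝ := r * Ups' w * w + Ups (-w) - s * Ups w

lemma cosh_ge_aux (w : ℝ) (hw : 0 ≤ w) : Real.exp w + Real.exp (-w) - 2 ≥ w ^ 2 := by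
  have hs : w / 2 ≤ Real.sinh (w / 2) := Real.self_le_sinh_iff.mpr (by linarith)
  rw [Real.sinh_eq] at hs
  have h1 : Real.exp (w / 2) * Real.exp (-(w / 2)) = 1 := by
    rw [← Real.exp_add]; simp
  have h2 : Real.exp (w / 2) * Real.exp (w / 2) = Real.exp w := by
    rw [← Real.exp_add]; ring_nf
  have h3 : Real.exp (-(w / 2)) * Real.exp (-(w / 2)) = Real.exp (-w) := by
    rw [← Real.exp_add]; ring_nf
  nlinarith [Real.exp_pos (w / 2), Real.exp_pos (-(w / 2)), hs]

lemma cosh_ge (w : ℝ) : Real.exp w + Real.exp (-w) - 2 ≥ w ^ 2 := by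
  rcases le_or_gt 0 w with h | h
  · exact cosh_ge_aux w h
  · have := cosh_ge_aux (-w) (by linarith)
    simp only [neg_neg] at this
    nlinarith [this]

lemma key (w : ℝ) : (w - 1) * Real.exp w + 1 ≥ 0 := by
  have h := Real.add_one_le_exp (-w)
  have h1 : Real.exp w * Real.exp (-w) = 1 := by rw [← Real.exp_add]; simp
  nlinarith [Real.exp_pos w]

theorem nu_ge_sq (r : ℝ) (hr : 0 ≤ r) (w : ℝ) : nu r (r - 1) w ≥ w ^ 2 := by
  unfold nu Ups Ups'
  nlinarith [cosh_ge w, mul_nonneg hr (key w)]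
end

section
/- Let Y = {1,…,m} with m ≥ 2 and let L be the complete-graph Laplacian (Lu)(i) = Σ_{j≠i}(u(j)-u(i)). Define Ψ_Υ(u)(i) = Σ_{j≠i} Υ(u(j)-u(i)), B_{Υ'}(u,v)(i) = Σ_{j≠i} Υ'(u(j)-u(i))(v(j)-v(i)), and Ψ_{2,Υ}(u) = (1/2)(L Ψ_Υ(u) - B_{Υ'}(u, Lu)). Then for all u and all i, Ψ_{2,Υ}(u)(i) ≥ (1/(2(m-1)))·(Lu(i))², i.e. L satisfies CD_Υ(0, 2(m-1)). -/
open Real Finset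

/-- Graph Laplacian of the unweighted complete graph on `Fin m`. -/
def Lcg (m : ℕ) (u : Fin m → ℝ) (i : Fin m) : ℝ :=
  ∑ j ∈ Finset.univ \ {i}, (u j - u i)

noncomputable def PsiUpsCg (m : ℕ) (u : Fin m → ℝ) (i : Fin m) : ℝ :=
  ∑ j ∈ Finset.univ \ {i}, Ups (u j - u i)

noncomputable def BUps'Cg (m : ℕ) (u v : Fin m → ℝ) (i : Fin m) : ℝ :=
  ∑ j ∈ Finset.univ \ {i}, Ups' (u j - u i) * (v j - v i)

noncomputable def Psi2UpsCg (m : ℕ) (u : Fin m → ℝ) (i : Fin m) : ℝ :=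
  (1 / 2) * (Lcg m (PsiUpsCg m u) i - BUps'Cg m u (Lcg m u) i)

lemma cd_sum_compl {m : ℕ} (i : Fin m) (f : Fin m → ℝ) (h : f i = 0) :
    ∑ j ∈ Finset.univ \ {i}, f j = ∑ j, f j := by
  rw [Finset.sum_sdiff_eq_sub (Finset.subset_univ _), Finset.sum_singleton, h, sub_zero]

lemma cd_key1 (a : ℝ) : (1 - a) * exp a ≤ 1 := by
  have h := mul_le_mul_of_nonneg_right (add_one_le_exp (-a)) (exp_pos a).le
  rw [← Real.exp_add, neg_add_cancel, Real.exp_zero] at h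
  nlinarith [h]

lemma cd_psi_nonneg (a : ℝ) : 0 ≤ (a - 1) * exp a + 1 := by
  nlinarith [cd_key1 a]

lemma cd_taylor4 (b : ℝ) (hb : 0 ≤ b) : 1 + b + b^2/2 + b^3/6 + b^4/24 ≤ exp b := by
  have h := Real.sum_le_exp_of_nonneg hb 5
  simp [Finset.sum_range_succ, Nat.factorial] at h
  linarith

lemma cd_phi_nonneg (a : ℝ) : 0 ≤ exp (-a) + (2*a-1) * exp a - a^2 := by
  have hprod : exp a * exp (-a) = 1 := by rw [← Real.exp_add, add_neg_cancel, Real.exp_zero]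
  rcases le_or_gt a 0 with h | h
  · have h1 := cd_taylor4 (-a) (by linarith)
    have h2 := cd_key1 (-a)
    nlinarith [exp_pos a, exp_pos (-a), mul_le_mul_of_nonneg_right h2 (exp_pos (-a)).le,
      mul_le_mul_of_nonneg_left h1 (exp_pos a).le, sq_nonneg a, sq_nonneg (a*a)]
  · rcases le_or_gt a (1/2) with h' | h'
    · have h1 := cd_key1 a
      have h2 : 1 + a + a^2/2 ≤ exp a := by
        have := Real.sum_le_exp_of_nonneg h.le 3
        simp [Finset.sum_range_succ, Nat.factorial] at this
        linarith
      nlinarith [exp_pos a, exp_pos (-a), hprod, mul_le_mul_of_nonneg_right h1 (exp_pos a).le,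
        sq_nonneg (exp a - 1)]
    · have h2 : 1 + a + a^2/2 ≤ exp a := by
        have := Real.sum_le_exp_of_nonneg h.le 3
        simp [Finset.sum_range_succ, Nat.factorial] at this
        linarith
      have h3 : 1 - a ≤ exp (-a) := by have := add_one_le_exp (-a); linarith
      nlinarith [exp_pos a, exp_pos (-a)]

lemma cd_pointwise (n a : ℝ) (hn : 1 ≤ n) :
    a^2 ≤ exp (-a) + ((n+1)*a - n) * exp a + n - 1 := by
  nlinarith [cd_phi_nonneg a, cd_psi_nonneg a,
    mul_nonneg (by linarith : (0:ℝ) ≤ n - 1) (cd_psi_nonneg a)]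

theorem completeGraph_CD_Ups (m : ℕ) (hm : 2 ≤ m) (u : Fin m → ℝ) (i : Fin m) :
    Psi2UpsCg m u i ≥ (1 / (2 * ((m : ℝ) - 1))) * (Lcg m u i) ^ 2 := by
  set a : Fin m → ℝ := fun j => u j - u i with ha
  have hai : a i = 0 := by simp [ha]
  set E := ∑ j, Real.exp (a j) with hE
  set F := ∑ j, Real.exp (-a j) with hF
  set A := ∑ j, a j with hA
  set S := ∑ j, a j * Real.exp (a j) with hS
  set n : ℝ := (m : ℝ) - 1 with hn
  have hn1 : 1 ≤ n := by
    have : (2:ℝ) ≤ (m:ℝ) := by exact_mod_cast hm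
    simp [hn]; linarith
  have hn0 : 0 < n := by linarith
  have hmn : (m:ℝ) = n + 1 := by simp [hn]
  -- Laplacian of u
  have hLu : ∀ j, Lcg m u j = A - m * a j := by
    intro j
    unfold Lcg
    rw [cd_sum_compl j _ (by simp)]
    have h1 : ∀ k, u k - u j = a k - a j := by intro k; simp [ha]
    rw [Finset.sum_congr rfl (fun k _ => h1 k), Finset.sum_sub_distrib, Finset.sum_const,
      Finset.card_univ, Fintype.card_fin, nsmul_eq_mul, ← hA]
  have hLui : Lcg m u i = A := by rw [hLu i, hai]; ring
  -- Psi at each vertex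
  have hUps0 : Ups 0 = 0 := by simp [Ups]
  have hPsi : ∀ j, PsiUpsCg m u j = ∑ k, Ups (a k - a j) := by
    intro j
    unfold PsiUpsCg
    rw [cd_sum_compl j _ (by simp [hUps0])]
    exact Finset.sum_congr rfl (fun k _ => by simp [ha])
  have hPsii : PsiUpsCg m u i = ∑ k, Ups (a k) := by
    rw [hPsi i]; exact Finset.sum_congr rfl (fun k _ => by rw [hai, sub_zero])
  have hExpand : ∀ j, PsiUpsCg m u j - PsiUpsCg m u i
      = Real.exp (-a j) * E - E + m * a j := by
    intro j
    rw [hPsi j, hPsii, ← Finset.sum_sub_distrib]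
    have h1 : ∀ k, Ups (a k - a j) - Ups (a k)
        = Real.exp (-a j) * Real.exp (a k) - Real.exp (a k) + a j := by
      intro k
      simp only [Ups]
      rw [show a k - a j = -a j + a k by ring, Real.exp_add]
      ring
    rw [Finset.sum_congr rfl (fun k _ => h1 k)]
    rw [Finset.sum_add_distrib, Finset.sum_sub_distrib, ← Finset.mul_sum, ← hE,
      Finset.sum_const, Finset.card_univ, Fintype.card_fin, nsmul_eq_mul]
  -- Laplacian of Psi
  have hLPsi : Lcg m (PsiUpsCg m u) i = F * E - m * E + m * A := by
    unfold Lcg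
    rw [cd_sum_compl i _ (by simp)]
    rw [Finset.sum_congr rfl (fun j _ => hExpand j)]
    rw [Finset.sum_add_distrib, Finset.sum_sub_distrib, ← Finset.sum_mul, ← hF,
      Finset.sum_const, Finset.card_univ, Fintype.card_fin, nsmul_eq_mul, ← Finset.mul_sum, ← hA]
  -- B term
  have hUps'0 : Ups' 0 = 0 := by simp [Ups']
  have hB : BUps'Cg m u (Lcg m u) i = m * A - m * S := by
    unfold BUps'Cg
    rw [cd_sum_compl i _ (by simp [hai, hUps'0])]
    have h1 : ∀ j, Ups' (u j - u i) * (Lcg m u j - Lcg m u i)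
        = m * a j - m * (a j * Real.exp (a j)) := by
      intro j
      rw [hLu j, hLui]
      simp only [Ups', ← ha]
      ring
    rw [Finset.sum_congr rfl (fun j _ => h1 j), Finset.sum_sub_distrib, ← Finset.mul_sum,
      ← Finset.mul_sum, ← hA, ← hS]
  have hPsi2 : Psi2UpsCg m u i = (1/2) * (E * F - m * E + m * S) := by
    unfold Psi2UpsCg
    rw [hLPsi, hB]; ring
  -- restricted sums
  have hsubE : ∑ j ∈ Finset.univ \ {i}, Real.exp (a j) = E - 1 := by
    rw [Finset.sum_sdiff_eq_sub (Finset.subset_univ _), Finset.sum_singleton, hai, Real.exp_zero, ← hE]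
  have hsubF : ∑ j ∈ Finset.univ \ {i}, Real.exp (-a j) = F - 1 := by
    rw [Finset.sum_sdiff_eq_sub (Finset.subset_univ _), Finset.sum_singleton, hai, neg_zero,
      Real.exp_zero, ← hF]
  have hsubA : ∑ j ∈ Finset.univ \ {i}, a j = A := by
    rw [Finset.sum_sdiff_eq_sub (Finset.subset_univ _), Finset.sum_singleton, hai, ← hA, sub_zero]
  have hsubS : ∑ j ∈ Finset.univ \ {i}, a j * Real.exp (a j) = S := by
    rw [Finset.sum_sdiff_eq_sub (Finset.subset_univ _), Finset.sum_singleton, hai, ← hS]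
    simp
  have hcard : ((Finset.univ \ {i} : Finset (Fin m)).card : ℝ) = n := by
    rw [Finset.card_sdiff_of_subset (by simp), Finset.card_singleton, Finset.card_univ, Fintype.card_fin]
    rw [hn, Nat.cast_sub (by omega)]
    norm_num
  -- Cauchy-Schwarz 1 : (E-1)*(F-1) ≥ n^2
  have hCS1 : n^2 ≤ (E - 1) * (F - 1) := by
    have h := Finset.sum_mul_sq_le_sq_mul_sq (Finset.univ \ {i})
      (fun j => Real.exp (a j / 2)) (fun j => Real.exp (-a j / 2))
    have e1 : ∀ j, Real.exp (a j / 2) * Real.exp (-a j / 2) = 1 := by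
      intro j
      rw [← Real.exp_add, show a j / 2 + -a j / 2 = 0 by ring, Real.exp_zero]
    have e2 : ∀ j, Real.exp (a j / 2) ^ 2 = Real.exp (a j) := by
      intro j
      rw [sq, ← Real.exp_add, show a j / 2 + a j / 2 = a j by ring]
    have e3 : ∀ j, Real.exp (-a j / 2) ^ 2 = Real.exp (-a j) := by
      intro j
      rw [sq, ← Real.exp_add, show -a j / 2 + -a j / 2 = -a j by ring]
    simp only [e1, e2, e3] at h
    rw [Finset.sum_const, nsmul_eq_mul, mul_one, hsubE, hsubF] at h
    calc n^2 = (((Finset.univ \ {i} : Finset (Fin m)).card : ℝ))^2 := by rw [hcard]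
    _ ≤ (E-1)*(F-1) := h
  -- Cauchy-Schwarz 2 : A^2 ≤ n * Q
  set Q := ∑ j ∈ Finset.univ \ {i}, (a j)^2 with hQ
  have hCS2 : A^2 ≤ n * Q := by
    have h := Finset.sum_mul_sq_le_sq_mul_sq (Finset.univ \ {i}) (fun _ => (1:ℝ)) a
    simp only [one_mul, one_pow] at h
    rw [Finset.sum_const, nsmul_eq_mul, mul_one, hsubA, ← hQ, hcard] at h
    exact h
  -- pointwise bound summed
  have hPW : Q ≤ (F - 1) + (m:ℝ) * S - n * (E - 1) + n * (n - 1) := by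
    have h : Q ≤ ∑ j ∈ Finset.univ \ {i},
        (Real.exp (-a j) + ((n+1) * a j - n) * Real.exp (a j) + n - 1) := by
      apply Finset.sum_le_sum
      intro j _
      exact cd_pointwise n (a j) hn1
    have heq : ∑ j ∈ Finset.univ \ {i},
        (Real.exp (-a j) + ((n+1) * a j - n) * Real.exp (a j) + n - 1)
        = (F - 1) + (n+1) * S - n * (E - 1) + n * (n - 1) := by
      have h1 : ∀ j, Real.exp (-a j) + ((n+1) * a j - n) * Real.exp (a j) + n - 1
          = Real.exp (-a j) + (n+1) * (a j * Real.exp (a j)) - n * Real.exp (a j) + (n - 1) := by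
        intro j; ring
      rw [Finset.sum_congr rfl (fun j _ => h1 j)]
      rw [Finset.sum_add_distrib, Finset.sum_sub_distrib, Finset.sum_add_distrib,
        ← Finset.mul_sum, ← Finset.mul_sum, hsubE, hsubF, hsubS, Finset.sum_const,
        nsmul_eq_mul, hcard]
    rw [heq] at h
    rw [hmn]
    linarith
  -- finish
  rw [ge_iff_le, hLui, hPsi2, hn] at *
  rw [show (1 / (2 * ((m:ℝ) - 1))) * A^2 = A^2 / (2 * n) by rw [hn]; ring]
  rw [div_le_iff₀ (by positivity)]
  nlinarith [hCS1, hCS2, hPW, hmn, hn0]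
end
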